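/- Let Σ be a strictly convex free-boundary disk-type hypersurface in the unit ball 𝔹 ⊂ ℝ^{n+1}. Assuming the IMCF starting at Σ converges to the flat unit disk 𝔻 as t → T_mc and the monotonicity of V^{-3}𝒯 and V^{-1}𝒯 along the flow, one has 𝒯(Σ)/V(Σ)³ ≥ 𝒯(𝔻)/V(𝔻)³ and 𝒯(Σ)/V(Σ) ≤ 𝒯(𝔻)/V(𝔻); combining these two inequalities yields V(Σ) ≤ V(𝔻) and 𝒯(Σ) ≤ 𝒯(𝔻). -/
import Mathlib


open Filter

/-- (Corollaries 6.5 and 6.6.)  Let `Σ` be a strictly convex free-boundary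
disk-type hypersurface in the unit ball `𝔹 ⊂ ℝ^{n+1}`, with torsional rigidity `TS = 𝒯(Σ)`
and volume `VS = V(Σ)`, and let `𝔻` be the flat unit disk with corresponding values
`TD = 𝒯(𝔻)`, `VD = V(𝔻)`.  Assume the IMCF `t ↦ (𝒯(Ω_t), V(Ω_t))` starting at `Σ`
(`𝒯 0 = TS`, `Vol 0 = VS`) converges to the flat disk values as `t → T_mc`, and that
`V⁻³𝒯` is non-increasing and `V⁻¹𝒯` is non-decreasing along the flow.  Then
`𝒯(Σ)/V(Σ)³ ≥ 𝒯(𝔻)/V(𝔻)³` and `𝒯(Σ)/V(Σ) ≤ 𝒯(𝔻)/V(𝔻)`, and combining these,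
`V(Σ) ≤ V(𝔻)` and `𝒯(Σ) ≤ 𝒯(𝔻)`. -/
theorem free_boundary_disk_comparison
    (Tmc : ℝ) (hT : 0 < Tmc) (𝒯 Vol : ℝ → ℝ) (TS VS TD VD : ℝ)
    (hT0 : 𝒯 0 = TS) (hV0 : Vol 0 = VS)
    (hTS : 0 < TS) (hVS : 0 < VS) (hTD : 0 < TD) (hVD : 0 < VD)
    (hmono1 : AntitoneOn (fun t => 𝒯 t / (Vol t) ^ 3) (Set.Ico (0 : ℝ) Tmc))
    (hmono2 : MonotoneOn (fun t => 𝒯 t / Vol t) (Set.Ico (0 : ℝ) Tmc))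
    (hlimT : Tendsto 𝒯 (nhdsWithin Tmc (Set.Iio Tmc)) (nhds TD))
    (hlimV : Tendsto Vol (nhdsWithin Tmc (Set.Iio Tmc)) (nhds VD)) :
    TD / VD ^ 3 ≤ TS / VS ^ 3 ∧ TS / VS ≤ TD / VD ∧ VS ≤ VD ∧ TS ≤ TD := by
  have hne : (nhdsWithin Tmc (Set.Iio Tmc)).NeBot := nhdsLT_neBot Tmc
  have hmem : Set.Ico (0 : ℝ) Tmc ∈ nhdsWithin Tmc (Set.Iio Tmc) := by
    have : Set.Ioi (0 : ℝ) ∈ nhds Tmc := Ioi_mem_nhds hT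
    filter_upwards [mem_nhdsWithin_of_mem_nhds this, self_mem_nhdsWithin] with t h1 h2
    exact ⟨le_of_lt h1, h2⟩
  have h0 : (0 : ℝ) ∈ Set.Ico (0 : ℝ) Tmc := ⟨le_refl 0, hT⟩
  have hlim1 : Tendsto (fun t => 𝒯 t / (Vol t) ^ 3) (nhdsWithin Tmc (Set.Iio Tmc))
      (nhds (TD / VD ^ 3)) := hlimT.div (hlimV.pow 3) (by positivity)
  have hlim2 : Tendsto (fun t => 𝒯 t / Vol t) (nhdsWithin Tmc (Set.Iio Tmc))
      (nhds (TD / VD)) := hlimT.div hlimV (ne_of_gt hVD)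
  have h1 : TD / VD ^ 3 ≤ TS / VS ^ 3 := by
    refine le_of_tendsto hlim1 ?_
    filter_upwards [hmem] with t ht
    have := hmono1 h0 ht ht.1
    simpa [hT0, hV0] using this
  have h2 : TS / VS ≤ TD / VD := by
    refine ge_of_tendsto hlim2 ?_
    filter_upwards [hmem] with t ht
    have := hmono2 h0 ht ht.1
    simpa [hT0, hV0] using this
  have h1' : TD * VS ^ 3 ≤ TS * VD ^ 3 := by
    rw [div_le_div_iff₀ (by positivity) (by positivity)] at h1; linarith
  have h2' : TS * VD ≤ TD * VS := by
    rw [div_le_div_iff₀ (by positivity) (by positivity)] at h2; linarith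
  have key : TS * VD ^ 3 ≤ TD * VS * VD ^ 2 := by nlinarith [mul_le_mul_of_nonneg_right h2' (sq_nonneg VD)]
  have hsq : VS ^ 2 ≤ VD ^ 2 := by nlinarith [mul_pos hTD hVS]
  have hV : VS ≤ VD := by nlinarith
  have hTle : TS ≤ TD := by nlinarith
  exact ⟨h1, h2, hV, hTle⟩
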